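/- Let z₀ ∈ ℝ, h > 0, ρ₁ > 0. Let U ⊆ ℝ² be an open set invariant under the reflection (ρ,z) ↦ (ρ, 2z₀ − z) containing the segments [0,ρ₁]×{z₀−h}, [0,ρ₁]×{z₀+h} and {ρ₁}×[z₀−h, z₀+h]. Let σ, ω be continuously differentiable on U ∩ {ρ > 0}, with σ(ρ, 2z₀ − z) = σ(ρ, z) and ω(ρ, 2z₀ − z) = ω(ρ, z). Set η = ρ²e^σ, P = (ρ/4)(σ_ρ² − σ_z²) + (ρ/(4η²))(ω_ρ² − ω_z²) and Q = (ρ/2)(σ_ρσ_z + η^{−2}ω_ρω_z), and assume P and Q extend continuously to U. Let q : U → ℝ be continuous on U, continuously differentiable on U ∩ {ρ > 0}, with ∂_ρ q = P and ∂_z q = Q there. Then q(0, z₀ + h) = q(0, z₀ − h). -/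

import Mathlib

/-- Partial derivative with respect to the first (ρ) variable. -/
noncomputable def pdr (f : ℝ × ℝ → ℝ) (p : ℝ × ℝ) : ℝ :=
  deriv (fun x => f (x, p.2)) p.1

/-- Partial derivative with respect to the second (z) variable. -/
noncomputable def pdz (f : ℝ × ℝ → ℝ) (p : ℝ × ℝ) : ℝ :=
  deriv (fun y => f (p.1, y)) p.2

/-!
The reflection `z ↦ 2 z₀ - z` preserves `σ_ρ`, `ω_ρ` and `η` and reverses the sign of `σ_z` and
`ω_z`, so `P` is even and `Q` is odd about `z₀`. Along the vertical segment `ρ = ρ₁`, the function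
`q(ρ₁, z) - q(ρ₁, 2 z₀ - z)` therefore has zero derivative and vanishes at `z = z₀`, which gives
`q(ρ₁, z₀ + h) = q(ρ₁, z₀ - h)`. Along the horizontal segments, `q(ρ, z₀ + h) - q(ρ, z₀ - h)` has
zero derivative for `0 < ρ < ρ₁`, and continuity of `q` up to the axis carries the equality
to `ρ = 0`.
-/

open Filter Set Topology

lemma eq_of_hasDerivAt_zero {f : ℝ → ℝ} {a b : ℝ} (hab : a ≤ b) (hf : ContinuousOn f (Icc a b))
    (hf' : ∀ x ∈ Ioo a b, HasDerivAt f 0 x) : f b = f a := by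
  have hftc := intervalIntegral.integral_eq_sub_of_hasDerivAt_of_le (f' := fun _ => 0) hab hf hf'
    intervalIntegrable_const
  rw [intervalIntegral.integral_zero] at hftc
  linarith

section PartialDerivatives

variable {f : ℝ × ℝ → ℝ}

lemma DifferentiableAt.hasDerivAt_pdr {x z : ℝ} (hf : DifferentiableAt ℝ f (x, z)) :
    HasDerivAt (fun t => f (t, z)) (pdr f (x, z)) x :=
  (hf.comp x (differentiableAt_id.prodMk (differentiableAt_const z))).hasDerivAt

lemma DifferentiableAt.hasDerivAt_pdz {x z : ℝ} (hf : DifferentiableAt ℝ f (x, z)) :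
    HasDerivAt (fun t => f (x, t)) (pdz f (x, z)) z :=
  (hf.comp z ((differentiableAt_const x).prodMk differentiableAt_id)).hasDerivAt

variable {c : ℝ} {p : ℝ × ℝ}

lemma pdr_reflect_of_eventuallyEq (hf : (fun q : ℝ × ℝ => f (q.1, c - q.2)) =ᶠ[𝓝 p] f) :
    pdr f (p.1, c - p.2) = pdr f p :=
  (hf.comp_tendsto ((Continuous.prodMk_left p.2).tendsto p.1)).deriv_eq

lemma pdz_reflect_of_eventuallyEq (hf : (fun q : ℝ × ℝ => f (q.1, c - q.2)) =ᶠ[𝓝 p] f) :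
    pdz f (p.1, c - p.2) = -pdz f p := by
  have hslice := (hf.comp_tendsto ((Continuous.prodMk_right p.1).tendsto p.2)).deriv_eq
  simp only [pdz, Function.comp_def] at hslice ⊢
  have hcomp := deriv_comp_const_sub (fun y => f (p.1, y)) c p.2
  linarith

end PartialDerivatives

noncomputable def weylP (σ ω η : ℝ × ℝ → ℝ) (p : ℝ × ℝ) : ℝ :=
  p.1 / 4 * ((pdr σ p) ^ 2 - (pdz σ p) ^ 2)
    + p.1 / (4 * (η p) ^ 2) * ((pdr ω p) ^ 2 - (pdz ω p) ^ 2)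

noncomputable def weylQ (σ ω η : ℝ × ℝ → ℝ) (p : ℝ × ℝ) : ℝ :=
  p.1 / 2 * (pdr σ p * pdz σ p + pdr ω p * pdz ω p / (η p) ^ 2)

section Reflection

variable {σ ω η : ℝ × ℝ → ℝ} {c : ℝ} {p : ℝ × ℝ}

lemma weylP_reflect (hσ : (fun q : ℝ × ℝ => σ (q.1, c - q.2)) =ᶠ[𝓝 p] σ)
    (hω : (fun q : ℝ × ℝ => ω (q.1, c - q.2)) =ᶠ[𝓝 p] ω) (hη : η (p.1, c - p.2) = η p) :
    weylP σ ω η (p.1, c - p.2) = weylP σ ω η p := by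
  simp only [weylP, pdr_reflect_of_eventuallyEq hσ, pdr_reflect_of_eventuallyEq hω,
    pdz_reflect_of_eventuallyEq hσ, pdz_reflect_of_eventuallyEq hω, hη]
  ring

lemma weylQ_reflect (hσ : (fun q : ℝ × ℝ => σ (q.1, c - q.2)) =ᶠ[𝓝 p] σ)
    (hω : (fun q : ℝ × ℝ => ω (q.1, c - q.2)) =ᶠ[𝓝 p] ω) (hη : η (p.1, c - p.2) = η p) :
    weylQ σ ω η (p.1, c - p.2) = -weylQ σ ω η p := by
  simp only [weylQ, pdr_reflect_of_eventuallyEq hσ, pdr_reflect_of_eventuallyEq hω,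
    pdz_reflect_of_eventuallyEq hσ, pdz_reflect_of_eventuallyEq hω, hη]
  ring

end Reflection

section Segments

variable {f : ℝ × ℝ → ℝ}

lemma sub_eq_sub_of_pdr_eq {a b z₁ z₂ : ℝ} (hab : a ≤ b)
    (hf₁ : ContinuousOn (fun x => f (x, z₁)) (Icc a b))
    (hf₂ : ContinuousOn (fun x => f (x, z₂)) (Icc a b))
    (hd₁ : ∀ x ∈ Ioo a b, DifferentiableAt ℝ f (x, z₁))
    (hd₂ : ∀ x ∈ Ioo a b, DifferentiableAt ℝ f (x, z₂))
    (h : ∀ x ∈ Ioo a b, pdr f (x, z₁) = pdr f (x, z₂)) :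
    f (b, z₁) - f (b, z₂) = f (a, z₁) - f (a, z₂) :=
  eq_of_hasDerivAt_zero (f := fun x => f (x, z₁) - f (x, z₂)) hab (hf₁.sub hf₂) fun x hx =>
    ((hd₁ x hx).hasDerivAt_pdr.sub (hd₂ x hx).hasDerivAt_pdr).congr_deriv (by rw [h x hx, sub_self])

lemma eq_of_pdz_reflect_eq_neg {x z₀ h : ℝ} (hh : 0 ≤ h)
    (hf : ContinuousOn (fun y => f (x, y)) (Icc (z₀ - h) (z₀ + h)))
    (hd : ∀ y ∈ Ioo (z₀ - h) (z₀ + h), DifferentiableAt ℝ f (x, y))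
    (hodd : ∀ y ∈ Ioo (z₀ - h) (z₀ + h), pdz f (x, 2 * z₀ - y) = -pdz f (x, y)) :
    f (x, z₀ + h) = f (x, z₀ - h) := by
  have hmaps : MapsTo (fun y => 2 * z₀ - y) (Icc z₀ (z₀ + h)) (Icc (z₀ - h) (z₀ + h)) :=
    fun y hy => ⟨by linarith [hy.2], by linarith [hy.1]⟩
  have hsub : Icc z₀ (z₀ + h) ⊆ Icc (z₀ - h) (z₀ + h) := Icc_subset_Icc_left (by linarith)
  have hconst := eq_of_hasDerivAt_zero (f := fun y => f (x, y) - f (x, 2 * z₀ - y))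
    (le_add_of_nonneg_right hh)
    ((hf.mono hsub).sub (hf.comp (continuous_const.sub continuous_id).continuousOn hmaps))
    fun y hy => by
      have hy' : y ∈ Ioo (z₀ - h) (z₀ + h) := ⟨by linarith [hy.1], hy.2⟩
      have hy'' : 2 * z₀ - y ∈ Ioo (z₀ - h) (z₀ + h) := ⟨by linarith [hy.2], by linarith [hy.1]⟩
      exact ((hd y hy').hasDerivAt_pdz.sub ((hd _ hy'').hasDerivAt_pdz.comp_const_sub (2 * z₀) y)
        ).congr_deriv (by rw [hodd y hy', neg_neg, sub_self])
  rw [show 2 * z₀ - (z₀ + h) = z₀ - h by ring, show 2 * z₀ - z₀ = z₀ by ring, sub_self] at hconst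
  exact sub_eq_zero.mp hconst

end Segments

theorem q_equal_on_axis_sigma_even_omega_even_general
    (z₀ h ρ₁ : ℝ) (hh : 0 < h) (hρ₁ : 0 < ρ₁)
    (U : Set (ℝ × ℝ)) (hU : IsOpen U)
    (hUsym : ∀ p ∈ U, (p.1, 2 * z₀ - p.2) ∈ U)
    (hsegm : ∀ x ∈ Set.Icc (0 : ℝ) ρ₁, (x, z₀ - h) ∈ U)
    (hsegp : ∀ x ∈ Set.Icc (0 : ℝ) ρ₁, (x, z₀ + h) ∈ U)
    (hsegv : ∀ y ∈ Set.Icc (z₀ - h) (z₀ + h), (ρ₁, y) ∈ U)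
    (σ ω : ℝ × ℝ → ℝ)
    (hσsym : ∀ p ∈ U, 0 < p.1 → σ (p.1, 2 * z₀ - p.2) = σ p)
    (hωsym : ∀ p ∈ U, 0 < p.1 → ω (p.1, 2 * z₀ - p.2) = ω p)
    (η P Q : ℝ × ℝ → ℝ)
    (hη : ∀ p, η p = p.1 ^ 2 * Real.exp (σ p))
    (hP : ∀ p ∈ U ∩ {p : ℝ × ℝ | 0 < p.1},
      P p = p.1 / 4 * ((pdr σ p) ^ 2 - (pdz σ p) ^ 2)
        + p.1 / (4 * (η p) ^ 2) * ((pdr ω p) ^ 2 - (pdz ω p) ^ 2))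
    (hQ : ∀ p ∈ U ∩ {p : ℝ × ℝ | 0 < p.1},
      Q p = p.1 / 2 * (pdr σ p * pdz σ p + pdr ω p * pdz ω p / (η p) ^ 2))
    (q : ℝ × ℝ → ℝ)
    (hqcont : ContinuousOn q U)
    (hqC1 : ContDiffOn ℝ 1 q (U ∩ {p : ℝ × ℝ | 0 < p.1}))
    (hqr : ∀ p ∈ U ∩ {p : ℝ × ℝ | 0 < p.1}, pdr q p = P p)
    (hqz : ∀ p ∈ U ∩ {p : ℝ × ℝ | 0 < p.1}, pdz q p = Q p) :
    q (0, z₀ + h) = q (0, z₀ - h) := by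
  set V := U ∩ {p : ℝ × ℝ | 0 < p.1}
  have hV : IsOpen V := hU.inter (isOpen_lt continuous_const continuous_fst)
  have hqd : ∀ p ∈ V, DifferentiableAt ℝ q p := fun p hp =>
    (hqC1.contDiffAt (hV.mem_nhds hp)).differentiableAt one_ne_zero
  have hreflect : ∀ p ∈ V, P (p.1, 2 * z₀ - p.2) = P p ∧ Q (p.1, 2 * z₀ - p.2) = -Q p := by
    intro p hp
    have heven : ∀ f : ℝ × ℝ → ℝ, (∀ p ∈ U, 0 < p.1 → f (p.1, 2 * z₀ - p.2) = f p) →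
        (fun q : ℝ × ℝ => f (q.1, 2 * z₀ - q.2)) =ᶠ[𝓝 p] f := fun f hf =>
      eventuallyEq_of_mem (hV.mem_nhds hp) fun q hq => hf q hq.1 hq.2
    have hηp : η (p.1, 2 * z₀ - p.2) = η p := by rw [hη, hη, hσsym p hp.1 hp.2]
    have hp' : (p.1, 2 * z₀ - p.2) ∈ V := ⟨hUsym p hp.1, hp.2⟩
    rw [hP _ hp', hP _ hp, hQ _ hp', hQ _ hp]
    exact ⟨weylP_reflect (heven σ hσsym) (heven ω hωsym) hηp,
      weylQ_reflect (heven σ hσsym) (heven ω hωsym) hηp⟩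
  have hvert : q (ρ₁, z₀ + h) = q (ρ₁, z₀ - h) := by
    refine eq_of_pdz_reflect_eq_neg hh.le (hqcont.comp (Continuous.prodMk_right ρ₁).continuousOn
      hsegv) (fun y hy => hqd _ ⟨hsegv y (Ioo_subset_Icc_self hy), hρ₁⟩) fun y hy => ?_
    have hp : (ρ₁, y) ∈ V := ⟨hsegv y (Ioo_subset_Icc_self hy), hρ₁⟩
    rw [hqz _ hp, hqz _ ⟨hUsym _ hp.1, hρ₁⟩, (hreflect _ hp).2]
  have hhor := sub_eq_sub_of_pdr_eq hρ₁.le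
    (hqcont.comp (Continuous.prodMk_left _).continuousOn hsegp)
    (hqcont.comp (Continuous.prodMk_left _).continuousOn hsegm)
    (fun x hx => hqd _ ⟨hsegp x (Ioo_subset_Icc_self hx), hx.1⟩)
    (fun x hx => hqd _ ⟨hsegm x (Ioo_subset_Icc_self hx), hx.1⟩) fun x hx => by
      have hp : (x, z₀ - h) ∈ V := ⟨hsegm x (Ioo_subset_Icc_self hx), hx.1⟩
      have hPeven := (hreflect _ hp).1
      rw [show 2 * z₀ - (z₀ - h) = z₀ + h by ring] at hPeven
      rw [hqr _ hp, hqr _ ⟨hsegp x (Ioo_subset_Icc_self hx), hx.1⟩, hPeven]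
  linarith

/-- for data symmetric about z₀ with both σ and ω even,
the values of the metric function q on the two axis points (0, z₀ ± h)
coincide. -/
theorem q_equal_on_axis_sigma_even_omega_even
    (z₀ h ρ₁ : ℝ) (hh : 0 < h) (hρ₁ : 0 < ρ₁)
    (U : Set (ℝ × ℝ)) (hU : IsOpen U)
    (hUsym : ∀ p ∈ U, (p.1, 2 * z₀ - p.2) ∈ U)
    (hsegm : ∀ x ∈ Set.Icc (0 : ℝ) ρ₁, (x, z₀ - h) ∈ U)
    (hsegp : ∀ x ∈ Set.Icc (0 : ℝ) ρ₁, (x, z₀ + h) ∈ U)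
    (hsegv : ∀ y ∈ Set.Icc (z₀ - h) (z₀ + h), (ρ₁, y) ∈ U)
    (σ ω : ℝ × ℝ → ℝ)
    (hσ : ContDiffOn ℝ 1 σ (U ∩ {p : ℝ × ℝ | 0 < p.1}))
    (hω : ContDiffOn ℝ 1 ω (U ∩ {p : ℝ × ℝ | 0 < p.1}))
    
    (hσsym : ∀ p ∈ U, 0 < p.1 → σ (p.1, 2 * z₀ - p.2) = σ p)
    (hωsym : ∀ p ∈ U, 0 < p.1 → ω (p.1, 2 * z₀ - p.2) = ω p)
    (η P Q : ℝ × ℝ → ℝ)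
    (hη : ∀ p, η p = p.1 ^ 2 * Real.exp (σ p))
    (hP : ∀ p ∈ U ∩ {p : ℝ × ℝ | 0 < p.1},
      P p = p.1 / 4 * ((pdr σ p) ^ 2 - (pdz σ p) ^ 2)
        + p.1 / (4 * (η p) ^ 2) * ((pdr ω p) ^ 2 - (pdz ω p) ^ 2))
    (hQ : ∀ p ∈ U ∩ {p : ℝ × ℝ | 0 < p.1},
      Q p = p.1 / 2 * (pdr σ p * pdz σ p + pdr ω p * pdz ω p / (η p) ^ 2))
    (hPcont : ContinuousOn P U) (hQcont : ContinuousOn Q U)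
    (q : ℝ × ℝ → ℝ)
    (hqcont : ContinuousOn q U)
    (hqC1 : ContDiffOn ℝ 1 q (U ∩ {p : ℝ × ℝ | 0 < p.1}))
    (hqr : ∀ p ∈ U ∩ {p : ℝ × ℝ | 0 < p.1}, pdr q p = P p)
    (hqz : ∀ p ∈ U ∩ {p : ℝ × ℝ | 0 < p.1}, pdz q p = Q p) :
    q (0, z₀ + h) = q (0, z₀ - h) :=
  q_equal_on_axis_sigma_even_omega_even_general z₀ h ρ₁ hh hρ₁ U hU hUsym hsegm hsegp hsegv σ ω
    hσsym hωsym η P Q hη hP hQ q hqcont hqC1 hqr hqz
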